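/- Let μ be a probability measure with finite moments, Jacobi parameters (β_n, γ_n), and free cumulants r_n. Then r_4 = γ_0[(β_1 − β_0)² + (γ_1 − γ_0)]. -/

import Mathlib

/-
The moment functional `L p = ∫ p dμ` kills `P n` for `n ≥ 1` and `P i * P j` for `i ≠ j`;
evaluating `L (X * P (n + 1) * P n)` in two ways gives `L (P (n + 1) ^ 2) = γ n * L (P n ^ 2)`.
Expanding `X ^ 2 = P 2 + (β 0 + β 1) P 1 + (β 0 ^ 2 + γ 0)` in the orthogonal basis then yields
the moments `m₁, …, m₄` in terms of `β 0, β 1, γ 0, γ 1`. On the cumulant side, listing `NC(m)`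
for `m ≤ 4` turns the moment–cumulant formula into a triangular system, whose solution is
`r₄ = m₄ - 4 m₃ m₁ - 2 m₂² + 10 m₂ m₁² - 5 m₁⁴`; substituting the moments gives the claim.
-/

open scoped Classical
open MeasureTheory Finset

noncomputable section

/-- `V` is nested inside `U`: some interval with endpoints in `U` contains all of `V`. -/
def Nests {m : ℕ} (U V : Finset (Fin m)) : Prop :=
  ∃ r ∈ U, ∃ s ∈ U, ∀ k ∈ V, r ≤ k ∧ k ≤ s

/-- A finpartition of `{1,...,m}` is noncrossing. -/
def IsNoncrossing {m : ℕ} (π : Finpartition (Finset.univ : Finset (Fin m))) : Prop :=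
  ∀ V₁ ∈ π.parts, ∀ V₂ ∈ π.parts, ∀ x₁ x₂ x₃ x₄ : Fin m,
    x₁ < x₂ → x₂ < x₃ → x₃ < x₄ →
    x₁ ∈ V₁ → x₃ ∈ V₁ → x₂ ∈ V₂ → x₄ ∈ V₂ → V₁ = V₂

/-- The depth of a block: the number of other blocks nesting it. -/
def depth {m : ℕ} (π : Finpartition (Finset.univ : Finset (Fin m)))
    (V : Finset (Fin m)) : ℕ :=
  (π.parts.filter (fun U => U ≠ V ∧ Nests U V)).card

/-- Noncrossing partitions of `{1,...,m}`. -/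
def NCset (m : ℕ) : Finset (Finpartition (Finset.univ : Finset (Fin m))) :=
  Finset.univ.filter IsNoncrossing

/-- Noncrossing partitions with all blocks of size at most 2. -/
def NC12 (m : ℕ) : Finset (Finpartition (Finset.univ : Finset (Fin m))) :=
  Finset.univ.filter (fun π => IsNoncrossing π ∧ ∀ V ∈ π.parts, V.card ≤ 2)

/-- Interval partitions of `{1,...,m}`. -/
def IntPart (m : ℕ) : Finset (Finpartition (Finset.univ : Finset (Fin m))) :=
  Finset.univ.filter
    (fun π => ∀ V ∈ π.parts, ∀ x ∈ V, ∀ y ∈ V, ∀ z : Fin m, x ≤ z → z ≤ y → z ∈ V)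

/-- The `m`-th moment of a measure on `ℝ`. -/
def mom (μ : Measure ℝ) (m : ℕ) : ℝ := ∫ x, x ^ m ∂μ

/-- `μ` has all moments finite. -/
def FiniteMoments (μ : Measure ℝ) : Prop :=
  ∀ m : ℕ, Integrable (fun x => x ^ m) μ

/-- `(β, γ)` are Jacobi parameters for `μ`: there are monic orthogonal polynomials
satisfying the three-term recurrence. -/
def HasJacobi (μ : Measure ℝ) (β γ : ℕ → ℝ) : Prop :=
  ∃ P : ℕ → Polynomial ℝ,
    (∀ n, (P n).Monic) ∧ (∀ n, (P n).natDegree = n) ∧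
    (∀ i j, i ≠ j → ∫ x, (P i).eval x * (P j).eval x ∂μ = 0) ∧
    (Polynomial.X * P 0 = P 1 + Polynomial.C (β 0) * P 0) ∧
    (∀ n, Polynomial.X * P (n + 1) =
      P (n + 2) + Polynomial.C (β (n + 1)) * P (n + 1) + Polynomial.C (γ n) * P n)

/-- `r` is the sequence of free cumulants of `μ` (moment-cumulant formula over
noncrossing partitions). -/
def FreeCumulants (μ : Measure ℝ) (r : ℕ → ℝ) : Prop :=
  ∀ m : ℕ, 1 ≤ m → mom μ m = ∑ π ∈ NCset m, ∏ V ∈ π.parts, r V.card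

/-- `η` is the sequence of Boolean cumulants of `μ`. -/
def BooleanCumulants (μ : Measure ℝ) (η : ℕ → ℝ) : Prop :=
  ∀ m : ℕ, 1 ≤ m → mom μ m = ∑ π ∈ IntPart m, ∏ V ∈ π.parts, η V.card

/-- `R` is the sequence of two-state free cumulants of the pair `(μ̃, μ)`,
where `r` are the free cumulants of `μ`. -/
def TwoStateCumulants (μt μ : Measure ℝ) (R r : ℕ → ℝ) : Prop :=
  FreeCumulants μ r ∧
  ∀ m : ℕ, 1 ≤ m → mom μt m =
    ∑ π ∈ NCset m,
      (∏ V ∈ π.parts.filter (fun V => depth π V = 0), R V.card) *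
      (∏ V ∈ π.parts.filter (fun V => depth π V ≠ 0), r V.card)

/- Under `open scoped Classical` the instance found otherwise is `Classical.propDecidable`,
which `decide` cannot evaluate. -/
instance {m : ℕ} (π : Finpartition (univ : Finset (Fin m))) : Decidable (IsNoncrossing π) :=
  inferInstanceAs (Decidable (∀ V₁ ∈ π.parts, ∀ V₂ ∈ π.parts, ∀ x₁ x₂ x₃ x₄ : Fin m,
    x₁ < x₂ → x₂ < x₃ → x₃ < x₄ → x₁ ∈ V₁ → x₃ ∈ V₁ → x₂ ∈ V₂ → x₄ ∈ V₂ → V₁ = V₂))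

theorem Finpartition.parts_eq_image_part {α : Type*} [DecidableEq α] {s : Finset α}
    (P : Finpartition s) : P.parts = s.image P.part := by
  ext t
  refine ⟨fun ht => ?_, fun ht => ?_⟩
  · obtain ⟨a, ha, rfl⟩ := P.part_surjOn ht
    exact mem_image_of_mem _ ha
  · obtain ⟨a, ha, rfl⟩ := mem_image.1 ht
    exact P.part_mem.2 ha

lemma sum_prod_card_parts_eq_sum_image {m : ℕ} (s : Finset (Finpartition (univ : Finset (Fin m))))
    (r : ℕ → ℝ) :
    ∑ π ∈ s, ∏ V ∈ π.parts, r V.card = ∑ ps ∈ s.image Finpartition.parts, ∏ V ∈ ps, r V.card :=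
  (sum_image (f := fun ps : Finset (Finset (Fin m)) => ∏ V ∈ ps, r V.card)
    fun _ _ _ _ => Finpartition.ext).symm

/- The blocks `A, B, …` of the points `0, 1, …` are enumerated by `decide`; stating each
constraint `a ∈ part b ↔ part a = part b` as soon as both blocks are chosen prunes the search. -/

lemma image_parts_NCset_one : (NCset 1).image Finpartition.parts = {{{0}}} := by
  ext ps
  simp only [NCset, mem_image, mem_filter, mem_univ, true_and]
  constructor
  · rintro ⟨π, -, rfl⟩
    have key : ∀ A : Finset (Fin 1), 0 ∈ A →
        ({A} : Finset (Finset (Fin 1))) ∈ ({{{0}}} : Finset (Finset (Finset (Fin 1)))) := by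
      decide
    have hparts : π.parts = {π.part 0} := by
      rw [π.parts_eq_image_part]
      rfl
    rw [hparts]
    exact key _ (π.mem_part (mem_univ 0))
  · intro h
    rw [mem_singleton] at h
    subst h
    exact ⟨⟨_, by decide, by decide, by decide⟩, by decide, rfl⟩

lemma image_parts_NCset_two :
    (NCset 2).image Finpartition.parts = {{{0, 1}}, {{0}, {1}}} := by
  ext ps
  simp only [NCset, mem_image, mem_filter, mem_univ, true_and]
  constructor
  · rintro ⟨π, -, rfl⟩
    have key : ∀ A : Finset (Fin 2), 0 ∈ A → ∀ B : Finset (Fin 2), 1 ∈ B →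
        (1 ∈ A ↔ B = A) → (0 ∈ B ↔ A = B) →
        ({A, B} : Finset (Finset (Fin 2))) ∈
          ({{{0, 1}}, {{0}, {1}}} : Finset (Finset (Finset (Fin 2)))) := by
      decide
    have hmem (a : Fin 2) : a ∈ π.part a := π.mem_part (mem_univ a)
    have hiff (a b : Fin 2) := π.mem_part_iff_part_eq_part (mem_univ a) (mem_univ b)
    have hparts : π.parts = {π.part 0, π.part 1} := by
      rw [π.parts_eq_image_part]
      show image π.part {0, 1} = _
      simp only [image_insert, image_singleton]
    rw [hparts]
    exact key _ (hmem 0) _ (hmem 1) (hiff 1 0) (hiff 0 1)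
  · intro h
    simp only [mem_insert, mem_singleton] at h
    rcases h with rfl | rfl <;> exact ⟨⟨_, by decide, by decide, by decide⟩, by decide, rfl⟩

lemma image_parts_NCset_three : (NCset 3).image Finpartition.parts =
    {{{0, 1, 2}}, {{0, 1}, {2}}, {{0, 2}, {1}}, {{1, 2}, {0}}, {{0}, {1}, {2}}} := by
  ext ps
  simp only [NCset, mem_image, mem_filter, mem_univ, true_and]
  constructor
  · rintro ⟨π, -, rfl⟩
    have key : ∀ A : Finset (Fin 3), 0 ∈ A → ∀ B : Finset (Fin 3), 1 ∈ B →
        (1 ∈ A ↔ B = A) → (0 ∈ B ↔ A = B) →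
        ∀ C : Finset (Fin 3), 2 ∈ C →
        (2 ∈ A ↔ C = A) → (0 ∈ C ↔ A = C) → (2 ∈ B ↔ C = B) → (1 ∈ C ↔ B = C) →
        ({A, B, C} : Finset (Finset (Fin 3))) ∈
          ({{{0, 1, 2}}, {{0, 1}, {2}}, {{0, 2}, {1}}, {{1, 2}, {0}}, {{0}, {1}, {2}}} :
            Finset (Finset (Finset (Fin 3)))) := by
      decide
    have hmem (a : Fin 3) : a ∈ π.part a := π.mem_part (mem_univ a)
    have hiff (a b : Fin 3) := π.mem_part_iff_part_eq_part (mem_univ a) (mem_univ b)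
    have hparts : π.parts = {π.part 0, π.part 1, π.part 2} := by
      rw [π.parts_eq_image_part]
      show image π.part {0, 1, 2} = _
      simp only [image_insert, image_singleton]
    rw [hparts]
    exact key _ (hmem 0) _ (hmem 1) (hiff 1 0) (hiff 0 1) _ (hmem 2) (hiff 2 0) (hiff 0 2)
      (hiff 2 1) (hiff 1 2)
  · intro h
    simp only [mem_insert, mem_singleton] at h
    rcases h with rfl | rfl | rfl | rfl | rfl <;>
      exact ⟨⟨_, by decide, by decide, by decide⟩, by decide, rfl⟩

/- All fifteen partitions of `Fin 4` except the crossing one `{{0, 2}, {1, 3}}`. -/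
set_option maxRecDepth 10000 in
set_option synthInstance.maxSize 1000 in
lemma image_parts_NCset_four : (NCset 4).image Finpartition.parts =
    {{{0, 1, 2, 3}},
      {{0, 1, 2}, {3}}, {{0, 1, 3}, {2}}, {{0, 2, 3}, {1}}, {{1, 2, 3}, {0}},
      {{0, 1}, {2, 3}}, {{0, 3}, {1, 2}},
      {{0, 1}, {2}, {3}}, {{0, 2}, {1}, {3}}, {{0, 3}, {1}, {2}},
      {{1, 2}, {0}, {3}}, {{1, 3}, {0}, {2}}, {{2, 3}, {0}, {1}},
      {{0}, {1}, {2}, {3}}} := by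
  ext ps
  simp only [NCset, mem_image, mem_filter, mem_univ, true_and]
  constructor
  · rintro ⟨π, hπ, rfl⟩
    have key : ∀ A : Finset (Fin 4), 0 ∈ A → ∀ B : Finset (Fin 4), 1 ∈ B →
        (1 ∈ A ↔ B = A) → (0 ∈ B ↔ A = B) →
        ∀ C : Finset (Fin 4), 2 ∈ C →
        (2 ∈ A ↔ C = A) → (0 ∈ C ↔ A = C) → (2 ∈ B ↔ C = B) → (1 ∈ C ↔ B = C) →
        ∀ D : Finset (Fin 4), 3 ∈ D →
        (3 ∈ A ↔ D = A) → (0 ∈ D ↔ A = D) → (3 ∈ B ↔ D = B) → (1 ∈ D ↔ B = D) →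
        (3 ∈ C ↔ D = C) → (2 ∈ D ↔ C = D) →
        (∀ V₁ ∈ ({A, B, C, D} : Finset (Finset (Fin 4))),
          ∀ V₂ ∈ ({A, B, C, D} : Finset (Finset (Fin 4))), ∀ x₁ x₂ x₃ x₄ : Fin 4,
          x₁ < x₂ → x₂ < x₃ → x₃ < x₄ → x₁ ∈ V₁ → x₃ ∈ V₁ → x₂ ∈ V₂ → x₄ ∈ V₂ → V₁ = V₂) →
        ({A, B, C, D} : Finset (Finset (Fin 4))) ∈
          ({{{0, 1, 2, 3}},
            {{0, 1, 2}, {3}}, {{0, 1, 3}, {2}}, {{0, 2, 3}, {1}}, {{1, 2, 3}, {0}},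
            {{0, 1}, {2, 3}}, {{0, 3}, {1, 2}},
            {{0, 1}, {2}, {3}}, {{0, 2}, {1}, {3}}, {{0, 3}, {1}, {2}},
            {{1, 2}, {0}, {3}}, {{1, 3}, {0}, {2}}, {{2, 3}, {0}, {1}},
            {{0}, {1}, {2}, {3}}} : Finset (Finset (Finset (Fin 4)))) := by
      decide
    have hmem (a : Fin 4) : a ∈ π.part a := π.mem_part (mem_univ a)
    have hiff (a b : Fin 4) := π.mem_part_iff_part_eq_part (mem_univ a) (mem_univ b)
    have hparts : π.parts = {π.part 0, π.part 1, π.part 2, π.part 3} := by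
      rw [π.parts_eq_image_part]
      show image π.part {0, 1, 2, 3} = _
      simp only [image_insert, image_singleton]
    unfold IsNoncrossing at hπ
    rw [hparts] at hπ ⊢
    exact key _ (hmem 0) _ (hmem 1) (hiff 1 0) (hiff 0 1) _ (hmem 2) (hiff 2 0) (hiff 0 2)
      (hiff 2 1) (hiff 1 2) _ (hmem 3) (hiff 3 0) (hiff 0 3) (hiff 3 1) (hiff 1 3) (hiff 3 2)
      (hiff 2 3) hπ
  · intro h
    simp only [mem_insert, mem_singleton] at h
    rcases h with rfl | rfl | rfl | rfl | rfl | rfl | rfl | rfl | rfl | rfl | rfl | rfl | rfl |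
      rfl <;>
      exact ⟨⟨_, by decide, by decide, by decide⟩, by decide, rfl⟩

lemma sum_NCset_one (r : ℕ → ℝ) : ∑ π ∈ NCset 1, ∏ V ∈ π.parts, r V.card = r 1 := by
  rw [sum_prod_card_parts_eq_sum_image, image_parts_NCset_one]
  simp +decide

lemma sum_NCset_two (r : ℕ → ℝ) :
    ∑ π ∈ NCset 2, ∏ V ∈ π.parts, r V.card = r 2 + r 1 ^ 2 := by
  rw [sum_prod_card_parts_eq_sum_image, image_parts_NCset_two]
  simp +decide [sum_insert, prod_insert]
  ring

lemma sum_NCset_three (r : ℕ → ℝ) :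
    ∑ π ∈ NCset 3, ∏ V ∈ π.parts, r V.card = r 3 + 3 * r 2 * r 1 + r 1 ^ 3 := by
  rw [sum_prod_card_parts_eq_sum_image, image_parts_NCset_three]
  simp +decide [sum_insert, prod_insert]
  ring

lemma sum_NCset_four (r : ℕ → ℝ) : ∑ π ∈ NCset 4, ∏ V ∈ π.parts, r V.card =
    r 4 + 4 * r 3 * r 1 + 2 * r 2 ^ 2 + 6 * r 2 * r 1 ^ 2 + r 1 ^ 4 := by
  rw [sum_prod_card_parts_eq_sum_image, image_parts_NCset_four]
  simp +decide [sum_insert, prod_insert]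
  ring

lemma FreeCumulants.four_eq_moments {μ : Measure ℝ} {r : ℕ → ℝ} (hr : FreeCumulants μ r) :
    r 4 = mom μ 4 - 4 * mom μ 3 * mom μ 1 - 2 * mom μ 2 ^ 2 + 10 * mom μ 2 * mom μ 1 ^ 2
      - 5 * mom μ 1 ^ 4 := by
  rw [hr 1 le_rfl, hr 2 (by norm_num), hr 3 (by norm_num), hr 4 (by norm_num), sum_NCset_one,
    sum_NCset_two, sum_NCset_three, sum_NCset_four]
  ring

section JacobiParameters

open Polynomial

lemma LinearMap.map_C_mul {R M : Type*} [CommSemiring R] [AddCommMonoid M] [Module R M]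
    (L : R[X] →ₗ[R] M) (a : R) (p : R[X]) : L (C a * p) = a • L p := by
  rw [C_mul', map_smul]

lemma FiniteMoments.integrable_eval {μ : Measure ℝ} (hμ : FiniteMoments μ) (p : ℝ[X]) :
    Integrable (fun x => p.eval x) μ := by
  induction p using Polynomial.induction_on' with
  | add p q hp hq =>
    simp only [eval_add]
    exact hp.add hq
  | monomial n a => simpa only [eval_monomial] using (hμ n).const_mul a

def momentFunctional (μ : Measure ℝ) (hμ : FiniteMoments μ) : ℝ[X] →ₗ[ℝ] ℝ where
  toFun p := ∫ x, p.eval x ∂μ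
  map_add' p q := by
    simpa only [eval_add] using integral_add (hμ.integrable_eval p) (hμ.integrable_eval q)
  map_smul' a p := by
    simpa only [eval_smul, smul_eq_mul, RingHom.id_apply] using integral_const_mul a _

lemma momentFunctional_apply {μ : Measure ℝ} (hμ : FiniteMoments μ) (p : ℝ[X]) :
    momentFunctional μ hμ p = ∫ x, p.eval x ∂μ := rfl

lemma momentFunctional_X_pow {μ : Measure ℝ} (hμ : FiniteMoments μ) (n : ℕ) :
    momentFunctional μ hμ (X ^ n) = mom μ n := by
  simp [momentFunctional_apply, mom]

lemma momentFunctional_one {μ : Measure ℝ} [IsProbabilityMeasure μ] (hμ : FiniteMoments μ) :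
    momentFunctional μ hμ 1 = 1 := by
  simp [momentFunctional_apply]

structure IsJacobiSystem (L : ℝ[X] →ₗ[ℝ] ℝ) (P : ℕ → ℝ[X]) (β γ : ℕ → ℝ) : Prop where
  zero : P 0 = 1
  orth : ∀ i j, i ≠ j → L (P i * P j) = 0
  rec_zero : X * P 0 = P 1 + C (β 0) * P 0
  rec_succ : ∀ n, X * P (n + 1) = P (n + 2) + C (β (n + 1)) * P (n + 1) + C (γ n) * P n

lemma HasJacobi.exists_isJacobiSystem {μ : Measure ℝ} {β γ : ℕ → ℝ} (hJ : HasJacobi μ β γ)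
    (hμ : FiniteMoments μ) : ∃ P, IsJacobiSystem (momentFunctional μ hμ) P β γ := by
  obtain ⟨P, hmonic, hdeg, horth, hrec0, hrec⟩ := hJ
  refine ⟨P, (hmonic 0).natDegree_eq_zero.mp (hdeg 0), fun i j hij => ?_, hrec0, hrec⟩
  simpa only [momentFunctional_apply, eval_mul] using horth i j hij

namespace IsJacobiSystem

variable {L : ℝ[X] →ₗ[ℝ] ℝ} {P : ℕ → ℝ[X]} {β γ : ℕ → ℝ}

lemma apply_succ (h : IsJacobiSystem L P β γ) (n : ℕ) : L (P (n + 1)) = 0 := by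
  simpa only [h.zero, mul_one] using h.orth (n + 1) 0 (by omega)

lemma apply_X_mul_mul (h : IsJacobiSystem L P β γ) (n : ℕ) :
    L (X * P (n + 1) * P n) = γ n * L (P n * P n) := by
  rw [h.rec_succ, add_mul, add_mul, mul_assoc, mul_assoc, map_add, map_add, L.map_C_mul,
    L.map_C_mul, h.orth _ _ (by omega), h.orth _ _ (by omega), smul_eq_mul, smul_eq_mul]
  ring

lemma apply_mul_X_mul (h : IsJacobiSystem L P β γ) (n : ℕ) :
    L (P (n + 1) * (X * P n)) = L (P (n + 1) * P (n + 1)) := by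
  cases n with
  | zero =>
    rw [h.rec_zero, mul_add, map_add, mul_left_comm, L.map_C_mul, h.zero, mul_one, h.apply_succ,
      smul_eq_mul]
    ring
  | succ n =>
    simp only [h.rec_succ, mul_add, map_add, mul_left_comm (P _) (C _), L.map_C_mul, smul_eq_mul,
      h.orth (n + 2) (n + 1) (by omega), h.orth (n + 2) n (by omega)]
    ring

lemma apply_mul_self_succ (h : IsJacobiSystem L P β γ) (n : ℕ) :
    L (P (n + 1) * P (n + 1)) = γ n * L (P n * P n) := by
  rw [← h.apply_X_mul_mul, ← h.apply_mul_X_mul]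
  congr 1
  ring

lemma apply_X_mul_succ_succ (h : IsJacobiSystem L P β γ) (n : ℕ) :
    L (X * P (n + 2)) = 0 := by
  simp only [h.rec_succ, map_add, L.map_C_mul, h.apply_succ, smul_eq_mul, mul_zero, add_zero]

lemma X_eq (h : IsJacobiSystem L P β γ) : X = P 1 + C (β 0) := by
  simpa only [h.zero, mul_one] using h.rec_zero

lemma X_sq_eq (h : IsJacobiSystem L P β γ) :
    X ^ 2 = P 2 + (β 0 + β 1) • P 1 + (β 0 ^ 2 + γ 0) • 1 := by
  have h1 := h.rec_succ 0
  rw [h.zero, mul_one] at h1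
  rw [smul_eq_C_mul, smul_eq_C_mul, map_add, map_add, map_pow]
  linear_combination (X + C (β 0)) * h.X_eq + h1

lemma apply_X (h : IsJacobiSystem L P β γ) (hL : L 1 = 1) : L X = β 0 := by
  rw [h.X_eq, map_add, h.apply_succ 0, ← mul_one (C _), L.map_C_mul, hL, smul_eq_mul]
  ring

lemma apply_X_mul_one (h : IsJacobiSystem L P β γ) (hL : L 1 = 1) : L (X * P 1) = γ 0 := by
  simpa only [h.zero, mul_one, hL] using h.apply_X_mul_mul 0

lemma apply_mul_self_one (h : IsJacobiSystem L P β γ) (hL : L 1 = 1) :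
    L (P 1 * P 1) = γ 0 := by
  simpa only [h.zero, mul_one, hL] using h.apply_mul_self_succ 0

lemma apply_mul_self_two (h : IsJacobiSystem L P β γ) (hL : L 1 = 1) :
    L (P 2 * P 2) = γ 1 * γ 0 := by
  rw [h.apply_mul_self_succ 1, h.apply_mul_self_one hL]

lemma apply_X_pow_two (h : IsJacobiSystem L P β γ) (hL : L 1 = 1) :
    L (X ^ 2) = β 0 ^ 2 + γ 0 := by
  simp only [h.X_sq_eq, map_add, map_smul, smul_eq_mul, h.apply_succ, hL]
  ring

lemma apply_X_pow_three (h : IsJacobiSystem L P β γ) (hL : L 1 = 1) :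
    L (X ^ 3) = β 0 ^ 3 + 2 * β 0 * γ 0 + β 1 * γ 0 := by
  rw [pow_succ', h.X_sq_eq]
  simp only [mul_add, mul_smul_comm, mul_one, map_add, map_smul, smul_eq_mul,
    h.apply_X_mul_succ_succ 0, h.apply_X_mul_one hL, h.apply_X hL]
  ring

lemma apply_X_pow_four (h : IsJacobiSystem L P β γ) (hL : L 1 = 1) :
    L (X ^ 4) = (β 0 ^ 2 + γ 0) ^ 2 + (β 0 + β 1) ^ 2 * γ 0 + γ 1 * γ 0 := by
  rw [show (X ^ 4 : ℝ[X]) = X ^ 2 * X ^ 2 by ring, h.X_sq_eq]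
  simp only [add_mul, mul_add, smul_mul_assoc, mul_smul_comm, mul_one, one_mul, map_add,
    map_smul, smul_eq_mul, h.apply_succ, hL, h.apply_mul_self_one hL, h.apply_mul_self_two hL,
    h.orth 1 2 (by omega), h.orth 2 1 (by omega)]
  ring

end IsJacobiSystem

lemma HasJacobi.moments_eq {μ : Measure ℝ} [IsProbabilityMeasure μ] {β γ : ℕ → ℝ}
    (hJ : HasJacobi μ β γ) (hμ : FiniteMoments μ) :
    mom μ 1 = β 0 ∧ mom μ 2 = β 0 ^ 2 + γ 0 ∧ mom μ 3 = β 0 ^ 3 + 2 * β 0 * γ 0 + β 1 * γ 0 ∧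
      mom μ 4 = (β 0 ^ 2 + γ 0) ^ 2 + (β 0 + β 1) ^ 2 * γ 0 + γ 1 * γ 0 := by
  obtain ⟨P, hP⟩ := hJ.exists_isJacobiSystem hμ
  have hL := momentFunctional_one hμ
  simp only [← momentFunctional_X_pow hμ, pow_one]
  exact ⟨hP.apply_X hL, hP.apply_X_pow_two hL, hP.apply_X_pow_three hL, hP.apply_X_pow_four hL⟩

end JacobiParameters

theorem stmt_3 (μ : Measure ℝ) [IsProbabilityMeasure μ] (hfin : FiniteMoments μ)
    (β γ : ℕ → ℝ) (hJ : HasJacobi μ β γ) (r : ℕ → ℝ) (hr : FreeCumulants μ r) :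
    r 4 = γ 0 * ((β 1 - β 0) ^ 2 + (γ 1 - γ 0)) := by
  obtain ⟨h1, h2, h3, h4⟩ := hJ.moments_eq hfin
  rw [hr.four_eq_moments, h1, h2, h3, h4]
  ring
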